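/- arXiv:2412.01287 — 4 statements merged into one kernel-verified Lean document; each statement's English description precedes it below -/
import Mathlib

section
/- Let d ≥ 1 and N > d be integers, let x ∈ ℝ^N have pairwise distinct entries, t_0 ∈ ℝ, and let Ω̂ ∈ ℝ^{N×N} be symmetric positive definite. If a* ∈ ℝ^N is the minimum-variance coefficient vector for (Ω̂, x, t_0, d), then there exists a real polynomial Q of degree at most d−1 such that Ω̂ a* = Q|_x, where Q|_x := (Q(x_1),…,Q(x_N)). Moreover, if Ω̂ = c I_{N×N} for some constant c > 0 (uniform uncorrelated noise), then a* itself equals R|_x for some real polynomial R of degree at most d−1. -/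
open Matrix Polynomial BigOperators

/-- `a` reproduces `Π_{d−1}` with the setting `(x, t₀)`. -/
def Reproduces {N : ℕ} (x : Fin N → ℝ) (t₀ : ℝ) (d : ℕ) (a : Fin N → ℝ) : Prop :=
  ∀ P : Polynomial ℝ, P.degree < (d : ℕ) → ∑ i, a i * P.eval (x i) = P.eval t₀

/-- `a` is minimum-variance for `(Ω̂, x, t₀, d)`: it reproduces `Π_{d−1}` and minimizes
the quadratic form `aᵀ Ω̂ a` among all reproducing coefficient vectors. -/
def MinVar {N : ℕ} (Ωhat : Matrix (Fin N) (Fin N) ℝ) (x : Fin N → ℝ) (t₀ : ℝ) (d : ℕ)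
    (a : Fin N → ℝ) : Prop :=
  Reproduces x t₀ d a ∧
    ∀ b : Fin N → ℝ, Reproduces x t₀ d b → a ⬝ᵥ Ωhat *ᵥ a ≤ b ⬝ᵥ Ωhat *ᵥ b

/-- If `w` is orthogonal to the orthogonal complement of `S`, then `w ∈ S`
(finite dimensions). -/
lemma aux_mem_of_orth {N : ℕ} (S : Submodule ℝ (EuclideanSpace ℝ (Fin N)))
    (w : EuclideanSpace ℝ (Fin N))
    (h : ∀ v : EuclideanSpace ℝ (Fin N), v ∈ Sᗮ → inner ℝ v w = (0:ℝ)) : w ∈ S := by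
  rw [← Submodule.orthogonal_orthogonal S, Submodule.mem_orthogonal]
  exact h

/-- The Euclidean inner product is the sum of coordinatewise products. -/
lemma aux_inner_eq {N : ℕ} (u v : EuclideanSpace ℝ (Fin N)) :
    inner ℝ u v = ∑ i, u i * v i := by
  simp [PiLp.inner_apply, RCLike.inner_apply, mul_comm]

set_option maxHeartbeats 800000 in
/-- If `a*` is minimum-variance for `(Ω̂, x, t₀, d)`, then `Ω̂ a* = Q|_x`
for some polynomial `Q` of degree at most `d−1`; moreover, in the uniform uncorrelated
case `Ω̂ = c I` (`c > 0`), `a*` itself is the restriction to the grid of a polynomial of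
degree at most `d−1`. -/
theorem minvar_is_polynomial (d N : ℕ) (hd : 1 ≤ d) (hdN : d < N)
    (x : Fin N → ℝ) (hx : Function.Injective x) (t₀ : ℝ)
    (Ωhat : Matrix (Fin N) (Fin N) ℝ) (hΩ : Ωhat.PosDef)
    (astar : Fin N → ℝ) (hastar : MinVar Ωhat x t₀ d astar) :
    (∃ Q : Polynomial ℝ, Q.degree < (d : ℕ) ∧
        Ωhat *ᵥ astar = fun i => Q.eval (x i)) ∧
      (∀ c : ℝ, 0 < c → Ωhat = c • (1 : Matrix (Fin N) (Fin N) ℝ) →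
        ∃ R : Polynomial ℝ, R.degree < (d : ℕ) ∧ astar = fun i => R.eval (x i)) := by
  classical
  have hsymm : Ωhat.IsSymm := by
    have := hΩ.isHermitian
    rwa [Matrix.IsHermitian, Matrix.conjTranspose_eq_transpose_of_trivial] at this
  have hsw : ∀ u v : Fin N → ℝ, u ⬝ᵥ Ωhat *ᵥ v = v ⬝ᵥ Ωhat *ᵥ u := by
    intro u v
    rw [Matrix.dotProduct_mulVec, ← Matrix.mulVec_transpose, hsymm.eq, dotProduct_comm]
  have key : ∀ v : Fin N → ℝ,
      (∀ P : Polynomial ℝ, P.degree < (d : ℕ) → ∑ i, v i * P.eval (x i) = 0) →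
      v ⬝ᵥ Ωhat *ᵥ astar = 0 := by
    intro v hv
    set c := v ⬝ᵥ Ωhat *ᵥ astar with hc
    set q := v ⬝ᵥ Ωhat *ᵥ v with hq
    have hq0 : 0 ≤ q := by
      simpa using hΩ.posSemidef.dotProduct_mulVec_nonneg v
    have hineq : ∀ t : ℝ, 0 ≤ 2 * t * c + t ^ 2 * q := by
      intro t
      have hrep : Reproduces x t₀ d (astar + t • v) := by
        intro P hP
        have h1 := hastar.1 P hP
        have h2 := hv P hP
        simp only [Pi.add_apply, Pi.smul_apply, smul_eq_mul, add_mul, mul_assoc,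
          Finset.sum_add_distrib, ← Finset.mul_sum, h1, h2, mul_zero, add_zero]
      have hmin := hastar.2 _ hrep
      have hexp : (astar + t • v) ⬝ᵥ Ωhat *ᵥ (astar + t • v)
          = astar ⬝ᵥ Ωhat *ᵥ astar + 2 * t * c + t ^ 2 * q := by
        simp only [Matrix.mulVec_add, Matrix.mulVec_smul, add_dotProduct,
          dotProduct_add, smul_dotProduct, dotProduct_smul,
          smul_eq_mul]
        rw [hsw astar v]
        ring
      rw [hexp] at hmin
      linarith
    have hc2 : c ^ 2 = 0 := by
      rcases hq0.eq_or_lt with hq' | hq'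
      · have := hineq (-c)
        refine le_antisymm ?_ (sq_nonneg c)
        nlinarith [this]
      · have h3 := mul_nonneg hq0 (hineq (-c / q))
        have heq : q * (2 * (-c / q) * c + (-c / q) ^ 2 * q) = -(c ^ 2) := by
          field_simp
          ring
        rw [heq] at h3
        exact le_antisymm (by linarith) (sq_nonneg c)
    exact sq_eq_zero_iff.mp hc2
  have hmem : (WithLp.toLp 2 (Ωhat *ᵥ astar) : EuclideanSpace ℝ (Fin N)) ∈
      ((Polynomial.degreeLT ℝ d).map
        ((WithLp.linearEquiv 2 ℝ (Fin N → ℝ)).symm.toLinearMap ∘ₗ LinearMap.pi (fun i => Polynomial.leval (x i)) :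
          Polynomial ℝ →ₗ[ℝ] EuclideanSpace ℝ (Fin N))) := by
    apply aux_mem_of_orth
    intro v hv
    rw [Submodule.mem_orthogonal] at hv
    have hv0 : ∀ P : Polynomial ℝ, P.degree < (d : ℕ) → ∑ i, v i * P.eval (x i) = 0 := by
      intro P hP
      have := hv _ ⟨P, Polynomial.mem_degreeLT.mpr hP, rfl⟩
      rw [aux_inner_eq] at this
      simpa [LinearMap.pi_apply, Polynomial.leval_apply, mul_comm] using this
    have := key v hv0
    rw [aux_inner_eq]
    simpa [dotProduct, Matrix.mulVec] using this
  obtain ⟨P, hP, hPeq⟩ := hmem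
  have hPdeg : P.degree < (d : ℕ) := Polynomial.mem_degreeLT.mp hP
  have hmain : Ωhat *ᵥ astar = fun i => P.eval (x i) := by
    funext i
    have := congrArg (fun w : EuclideanSpace ℝ (Fin N) => w i) hPeq
    simpa [LinearMap.pi_apply, Polynomial.leval_apply] using this.symm
  refine ⟨⟨P, hPdeg, hmain⟩, ?_⟩
  intro c hc hΩc
  refine ⟨c⁻¹ • P, lt_of_le_of_lt (Polynomial.degree_smul_le _ _) hPdeg, ?_⟩
  funext i
  have h1 : Ωhat *ᵥ astar = c • astar := by
    rw [hΩc, Matrix.smul_mulVec, Matrix.one_mulVec]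
  have h2 := congrFun hmain i
  rw [h1] at h2
  simp only [Pi.smul_apply, smul_eq_mul] at h2
  have hai : astar i = c⁻¹ * P.eval (x i) := by
    field_simp
    linarith [h2]
  simpa [Polynomial.eval_smul, smul_eq_mul] using hai
end

section
/- Let d ≥ 1 and N > d be integers, let x ∈ ℝ^N have pairwise distinct entries, t_0 ∈ ℝ, let Ω̂ ∈ ℝ^{N×N} be symmetric positive definite, and let a ∈ ℝ^N reproduce Π_{d−1} with the setting (x, t_0). Then a is minimum-variance for (Ω̂, x, t_0, d) if and only if there exists a real polynomial Q of degree at most d−1 such that a = Ω̂⁻¹ Q|_x. -/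
open Matrix Polynomial BigOperators

noncomputable def evalVec {N : ℕ} (x : Fin N → ℝ) : Polynomial ℝ →ₗ[ℝ] EuclideanSpace ℝ (Fin N) :=
  (WithLp.linearEquiv 2 ℝ (Fin N → ℝ)).symm.toLinearMap ∘ₗ
    LinearMap.pi (fun i => Polynomial.leval (x i))

lemma evalVec_apply {N : ℕ} (x : Fin N → ℝ) (Q : Polynomial ℝ) (i : Fin N) :
    evalVec x Q i = Q.eval (x i) := rfl

noncomputable def polySpace {N : ℕ} (x : Fin N → ℝ) (d : ℕ) :
    Submodule ℝ (EuclideanSpace ℝ (Fin N)) :=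
  Submodule.map (evalVec x) (Polynomial.degreeLT ℝ d)

lemma mem_polySpace {N : ℕ} {x : Fin N → ℝ} {d : ℕ} {v : EuclideanSpace ℝ (Fin N)} :
    v ∈ polySpace x d ↔ ∃ Q : Polynomial ℝ, Q.degree < (d : ℕ) ∧ ∀ i, v i = Q.eval (x i) := by
  constructor
  · rintro ⟨Q, hQ, rfl⟩
    exact ⟨Q, Polynomial.mem_degreeLT.mp hQ, fun i => rfl⟩
  · rintro ⟨Q, hQ, hv⟩
    refine ⟨Q, Polynomial.mem_degreeLT.mpr hQ, ?_⟩
    ext i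
    exact (hv i).symm

lemma euclid_inner_eq {N : ℕ} (u v : EuclideanSpace ℝ (Fin N)) :
    (inner ℝ u v : ℝ) = ∑ i, u i * v i := by
  simp [PiLp.inner_apply, RCLike.inner_apply, mul_comm]

/-- `b` reproduces iff `b - a ∈ (polySpace x d)ᗮ`, given that `a` reproduces. -/
lemma repro_iff_sub_mem {N : ℕ} {x : Fin N → ℝ} {t₀ : ℝ} {d : ℕ} {a b : Fin N → ℝ}
    (ha : Reproduces x t₀ d a) :
    Reproduces x t₀ d b ↔ (WithLp.toLp 2 (b - a) : EuclideanSpace ℝ (Fin N)) ∈ (polySpace x d)ᗮ := by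
  rw [Submodule.mem_orthogonal]
  constructor
  · intro hb u hu
    obtain ⟨Q, hQ, hQu⟩ := mem_polySpace.mp hu
    rw [euclid_inner_eq]
    have : ∑ i, u i * (b i - a i) = (∑ i, b i * Q.eval (x i)) - ∑ i, a i * Q.eval (x i) := by
      rw [← Finset.sum_sub_distrib]
      refine Finset.sum_congr rfl fun i _ => by rw [hQu i]; ring
    have hsub : ∀ i, (WithLp.toLp 2 (b - a) : EuclideanSpace ℝ (Fin N)) i = b i - a i :=
      fun i => rfl
    simp only [hsub, Pi.sub_apply]
    rw [this, hb Q hQ, ha Q hQ, sub_self]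
  · intro h P hP
    have hmem : evalVec x P ∈ polySpace x d :=
      ⟨P, Polynomial.mem_degreeLT.mpr hP, rfl⟩
    have := h (evalVec x P) hmem
    rw [euclid_inner_eq] at this
    have heq : ∑ i, (P.eval (x i)) * (b i - a i) = 0 := this
    have : (∑ i, b i * P.eval (x i)) - ∑ i, a i * P.eval (x i) = 0 := by
      rw [← Finset.sum_sub_distrib, ← heq]
      exact Finset.sum_congr rfl fun i _ => by ring
    have := sub_eq_zero.mp this
    rw [this, ha P hP]

/-- A coefficient vector `a` reproducing `Π_{d−1}` with the setting
`(x, t₀)` is minimum-variance for `(Ω̂, x, t₀, d)` if and only if `a = Ω̂⁻¹ Q|_x` for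
some polynomial `Q` of degree at most `d−1`. -/
theorem minvar_characterization (d N : ℕ) (hd : 1 ≤ d) (hdN : d < N)
    (x : Fin N → ℝ) (hx : Function.Injective x) (t₀ : ℝ)
    (Ωhat : Matrix (Fin N) (Fin N) ℝ) (hΩ : Ωhat.PosDef)
    (a : Fin N → ℝ) (ha : Reproduces x t₀ d a) :
    MinVar Ωhat x t₀ d a ↔
      ∃ Q : Polynomial ℝ, Q.degree < (d : ℕ) ∧ a = Ωhat⁻¹ *ᵥ fun i => Q.eval (x i) := by
  have hdet : IsUnit Ωhat.det := isUnit_iff_ne_zero.mpr hΩ.det_pos.ne'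
  have hsymm : Ωhatᵀ = Ωhat := by
    rw [← Matrix.conjTranspose_eq_transpose_of_trivial]; exact hΩ.1
  have hswap : ∀ u w : Fin N → ℝ, u ⬝ᵥ Ωhat *ᵥ w = w ⬝ᵥ Ωhat *ᵥ u := by
    intro u w
    rw [Matrix.dotProduct_mulVec, ← Matrix.mulVec_transpose, hsymm, dotProduct_comm]
  constructor
  · rintro ⟨-, hmin⟩
    -- Show Ωhat *ᵥ a ∈ polySpace x d
    have hmem : (WithLp.toLp 2 (Ωhat *ᵥ a) : EuclideanSpace ℝ (Fin N)) ∈ polySpace x d := by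
      rw [← Submodule.orthogonal_orthogonal (polySpace x d), Submodule.mem_orthogonal]
      intro wE hw
      obtain ⟨w, hwe⟩ : ∃ w : Fin N → ℝ, wE = WithLp.toLp 2 w := ⟨wE.ofLp, rfl⟩
      rw [euclid_inner_eq]
      have hc : ∀ i, (WithLp.toLp 2 (Ωhat *ᵥ a) : EuclideanSpace ℝ (Fin N)) i = (Ωhat *ᵥ a) i :=
        fun i => rfl
      have key : w ⬝ᵥ Ωhat *ᵥ a = 0 := by
        set c := w ⬝ᵥ Ωhat *ᵥ a with hcdef
        by_cases hw0 : w = 0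
        · rw [hcdef, hw0]; simp
        · have hq : 0 < w ⬝ᵥ Ωhat *ᵥ w := by
            have := hΩ.dotProduct_mulVec_pos hw0; simpa using this
          set q := w ⬝ᵥ Ωhat *ᵥ w with hqdef
          -- a + t • w reproduces for all t
          have hrepro : ∀ t : ℝ, Reproduces x t₀ d (a + t • w) := by
            intro t
            rw [repro_iff_sub_mem ha]
            have heq : (WithLp.toLp 2 ((a + t • w) - a) : EuclideanSpace ℝ (Fin N)) = t • wE := by
              rw [hwe]
              ext i
              show (a i + t * w i) - a i = t * w i
              ring
            rw [heq]
            exact Submodule.smul_mem _ t hw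
          have hineq : ∀ t : ℝ, 0 ≤ 2 * t * c + t ^ 2 * q := by
            intro t
            have h1 := hmin _ (hrepro t)
            have hexp : (a + t • w) ⬝ᵥ Ωhat *ᵥ (a + t • w)
                = a ⬝ᵥ Ωhat *ᵥ a + 2 * t * c + t ^ 2 * q := by
              rw [hcdef, hqdef]
              have h2 : a ⬝ᵥ Ωhat *ᵥ w = w ⬝ᵥ Ωhat *ᵥ a := hswap a w
              simp only [Matrix.mulVec_add, dotProduct_add, add_dotProduct,
                Matrix.mulVec_smul, dotProduct_smul, smul_dotProduct,
                smul_eq_mul]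
              rw [h2]; ring
            rw [hexp] at h1
            linarith
          have hkey := hineq (-c / q)
          have h2 : 2 * (-c / q) * c + (-c / q) ^ 2 * q = -(c ^ 2) / q := by
            field_simp; ring
          rw [h2] at hkey
          have h3 : (0:ℝ) ≤ -(c ^ 2) := by
            have h4 := mul_nonneg hkey hq.le
            rwa [div_mul_cancel₀ _ hq.ne'] at h4
          have hc2 : c ^ 2 = 0 := le_antisymm (by linarith) (sq_nonneg c)
          exact pow_eq_zero_iff two_ne_zero |>.mp hc2
      calc ∑ i, wE i * (WithLp.toLp 2 (Ωhat *ᵥ a) : EuclideanSpace ℝ (Fin N)) i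
          = w ⬝ᵥ Ωhat *ᵥ a := by rw [hwe]; rfl
        _ = 0 := key
    obtain ⟨Q, hQ, hQv⟩ := mem_polySpace.mp hmem
    refine ⟨Q, hQ, ?_⟩
    have hva : (fun i => Q.eval (x i)) = Ωhat *ᵥ a := by
      funext i; exact (hQv i).symm
    rw [hva, Matrix.mulVec_mulVec, Matrix.nonsing_inv_mul _ hdet, Matrix.one_mulVec]
  · rintro ⟨Q, hQ, haQ⟩
    refine ⟨ha, ?_⟩
    intro b hb
    have hΩa : Ωhat *ᵥ a = fun i => Q.eval (x i) := by
      rw [haQ, Matrix.mulVec_mulVec, Matrix.mul_nonsing_inv _ hdet, Matrix.one_mulVec]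
    set w : Fin N → ℝ := b - a with hwdef
    have hb' : b = a + w := by funext i; simp [hwdef]
    have hcross : w ⬝ᵥ Ωhat *ᵥ a = 0 := by
      have : w ⬝ᵥ Ωhat *ᵥ a = ∑ i, (b i - a i) * Q.eval (x i) := by
        rw [hΩa]; rfl
      rw [this]
      have hsplit : ∑ i, (b i - a i) * Q.eval (x i)
          = (∑ i, b i * Q.eval (x i)) - ∑ i, a i * Q.eval (x i) := by
        rw [← Finset.sum_sub_distrib]
        exact Finset.sum_congr rfl fun i _ => by ring
      rw [hsplit, hb Q hQ, ha Q hQ, sub_self]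
    have hq : 0 ≤ w ⬝ᵥ Ωhat *ᵥ w := by
      have := hΩ.posSemidef.dotProduct_mulVec_nonneg w; simpa using this
    have h2 : a ⬝ᵥ Ωhat *ᵥ w = 0 := by rw [hswap a w]; exact hcross
    have hexp : b ⬝ᵥ Ωhat *ᵥ b
        = a ⬝ᵥ Ωhat *ᵥ a + a ⬝ᵥ Ωhat *ᵥ w + w ⬝ᵥ Ωhat *ᵥ a + w ⬝ᵥ Ωhat *ᵥ w := by
      rw [hb']
      simp only [Matrix.mulVec_add, dotProduct_add, add_dotProduct]
      ring
    rw [hexp, hcross, h2]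
    linarith
end

section
/- Let d ≥ 1 and N > d be integers, let x ∈ ℝ^N have pairwise distinct entries, t_0 ∈ ℝ, and let Ω̂ ∈ ℝ^{N×N} be symmetric positive definite. Equip the space of real polynomials of degree at most N−1 with the inner product (P, Q) := P|_xᵀ Ω̂⁻¹ Q|_x. Let P^0, …, P^{d−1} be polynomials with deg P^s ≤ s that are orthonormal for this inner product. Then the minimum-variance coefficient vector for (Ω̂, x, t_0, d) is a = Ω̂⁻¹ Q|_x, where Q := ∑_{j=0}^{d−1} P^j(t_0) P^j. -/
open Matrix Polynomial BigOperators

/-- The inner product `(P, Q) := P|_xᵀ Ω̂⁻¹ Q|_x` on polynomials. -/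
noncomputable def polyInner {N : ℕ} (Ωhat : Matrix (Fin N) (Fin N) ℝ)
    (x : Fin N → ℝ) (P Q : Polynomial ℝ) : ℝ :=
  (fun i => P.eval (x i)) ⬝ᵥ Ωhat⁻¹ *ᵥ fun i => Q.eval (x i)

section lemmas

variable {N : ℕ} (Ω : Matrix (Fin N) (Fin N) ℝ) (x : Fin N → ℝ)

lemma polyInner_expand (R T : Polynomial ℝ) :
    polyInner Ω x R T = ∑ i, ∑ k, R.eval (x i) * (Ω⁻¹ i k * T.eval (x k)) := by
  simp [polyInner, dotProduct, Matrix.mulVec, Finset.mul_sum]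

lemma evalVec_add (R S : Polynomial ℝ) :
    (fun i => (R + S).eval (x i)) = (fun i => R.eval (x i)) + (fun i => S.eval (x i)) := by
  funext i; simp

lemma evalVec_smul (c : ℝ) (R : Polynomial ℝ) :
    (fun i => (c • R).eval (x i)) = c • fun i => R.eval (x i) := by
  funext i; simp

lemma evalVec_zero : (fun i => (0 : Polynomial ℝ).eval (x i)) = (0 : Fin N → ℝ) := by
  funext i; simp

lemma polyInner_zero_left (T : Polynomial ℝ) : polyInner Ω x 0 T = 0 := by
  rw [polyInner, evalVec_zero, zero_dotProduct]

lemma polyInner_add_left (R S T : Polynomial ℝ) :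
    polyInner Ω x (R + S) T = polyInner Ω x R T + polyInner Ω x S T := by
  simp only [polyInner]; rw [evalVec_add, add_dotProduct]

lemma polyInner_smul_left (c : ℝ) (R T : Polynomial ℝ) :
    polyInner Ω x (c • R) T = c * polyInner Ω x R T := by
  simp only [polyInner]; rw [evalVec_smul, smul_dotProduct, smul_eq_mul]

lemma polyInner_zero_right (T : Polynomial ℝ) : polyInner Ω x T 0 = 0 := by
  rw [polyInner, evalVec_zero, Matrix.mulVec_zero, dotProduct_zero]

lemma polyInner_add_right (T R S : Polynomial ℝ) :
    polyInner Ω x T (R + S) = polyInner Ω x T R + polyInner Ω x T S := by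
  simp only [polyInner]; rw [evalVec_add, Matrix.mulVec_add, dotProduct_add]

lemma polyInner_smul_right (c : ℝ) (T R : Polynomial ℝ) :
    polyInner Ω x T (c • R) = c * polyInner Ω x T R := by
  simp only [polyInner]; rw [evalVec_smul, Matrix.mulVec_smul, dotProduct_smul, smul_eq_mul]

lemma polyInner_sum_left {ι : Type*} (s : Finset ι) (c : ι → ℝ) (Ps : ι → Polynomial ℝ)
    (T : Polynomial ℝ) :
    polyInner Ω x (∑ j ∈ s, c j • Ps j) T = ∑ j ∈ s, c j * polyInner Ω x (Ps j) T := by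
  induction s using Finset.cons_induction with
  | empty => simp [polyInner_zero_left]
  | cons j s hj ih =>
      rw [Finset.sum_cons, Finset.sum_cons, polyInner_add_left, polyInner_smul_left, ih]

lemma polyInner_sum_right {ι : Type*} (s : Finset ι) (c : ι → ℝ) (Ps : ι → Polynomial ℝ)
    (T : Polynomial ℝ) :
    polyInner Ω x T (∑ j ∈ s, c j • Ps j) = ∑ j ∈ s, c j * polyInner Ω x T (Ps j) := by
  induction s using Finset.cons_induction with
  | empty => simp [polyInner_zero_right]
  | cons j s hj ih =>
      rw [Finset.sum_cons, Finset.sum_cons, polyInner_add_right, polyInner_smul_right, ih]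

lemma polyInner_symm (h : (Ω⁻¹)ᵀ = Ω⁻¹) (R T : Polynomial ℝ) :
    polyInner Ω x R T = polyInner Ω x T R := by
  rw [polyInner_expand, polyInner_expand]
  conv_lhs => rw [Finset.sum_comm]
  refine Finset.sum_congr rfl fun k _ => Finset.sum_congr rfl fun i _ => ?_
  have hik : Ω⁻¹ i k = Ω⁻¹ k i := by
    simpa [Matrix.transpose_apply] using congrFun (congrFun h k) i
  rw [hik]; ring

end lemmas

/-- If `P⁰,…,P^{d−1}` are polynomials with `deg Pˢ ≤ s`, orthonormal for
the inner product `(P, Q) = P|_xᵀ Ω̂⁻¹ Q|_x`, then the minimum-variance coefficient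
vector for `(Ω̂, x, t₀, d)` is `a = Ω̂⁻¹ Q|_x` with `Q := ∑_{j<d} Pʲ(t₀) Pʲ`. -/
theorem minvar_orthonormal_formula (d N : ℕ) (hd : 1 ≤ d) (hdN : d < N)
    (x : Fin N → ℝ) (hx : Function.Injective x) (t₀ : ℝ)
    (Ωhat : Matrix (Fin N) (Fin N) ℝ) (hΩ : Ωhat.PosDef)
    (P : Fin d → Polynomial ℝ)
    (hdeg : ∀ s : Fin d, (P s).degree ≤ (s : ℕ))
    (horth : ∀ s t : Fin d, polyInner Ωhat x (P s) (P t) = if s = t then 1 else 0) :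
    MinVar Ωhat x t₀ d
      (Ωhat⁻¹ *ᵥ fun i => (∑ j : Fin d, (P j).eval t₀ • P j).eval (x i)) := by
  classical
  set Q : Polynomial ℝ := ∑ j : Fin d, (P j).eval t₀ • P j with hQdef
  set a : Fin N → ℝ := Ωhat⁻¹ *ᵥ fun i => Q.eval (x i) with ha
  -- basic matrix facts
  have hdet : IsUnit Ωhat.det := hΩ.det_pos.ne'.isUnit
  have hsymm : Ωhatᵀ = Ωhat := by
    have := hΩ.1
    rwa [Matrix.IsHermitian, Matrix.conjTranspose_eq_transpose_of_trivial] at this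
  have hinvsymm : (Ωhat⁻¹)ᵀ = Ωhat⁻¹ := by
    rw [Matrix.transpose_nonsing_inv, hsymm]
  -- the polynomials P are linearly independent
  have hli : LinearIndependent ℝ P := by
    rw [Fintype.linearIndependent_iff]
    intro g hg j
    have h1 : polyInner Ωhat x (∑ i, g i • P i) (P j) = g j := by
      rw [polyInner_sum_left]
      simp [horth]
    have h2 : polyInner Ωhat x (∑ i, g i • P i) (P j) = 0 := by
      rw [hg, polyInner_zero_left]
    rw [h1] at h2; exact h2
  -- P maps into degreeLT ℝ d
  have hmem : ∀ s : Fin d, P s ∈ degreeLT ℝ d :=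
    fun s => mem_degreeLT.2 (lt_of_le_of_lt (hdeg s) (by exact_mod_cast s.2))
  -- every polynomial of degree < d is a combination of the P's
  have hrep : ∀ R : Polynomial ℝ, R.degree < (d : ℕ) →
      ∃ c : Fin d → ℝ, ∑ j, c j • P j = R := by
    intro R hR
    haveI hfin : FiniteDimensional ℝ (degreeLT ℝ d) :=
      (Polynomial.degreeLTEquiv ℝ d).symm.finiteDimensional
    have hfr : Module.finrank ℝ (degreeLT ℝ d) = d := by
      rw [(Polynomial.degreeLTEquiv ℝ d).finrank_eq, Module.finrank_fin_fun]
    set v : Fin d → degreeLT ℝ d := fun s => ⟨P s, hmem s⟩ with hv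
    have hliv : LinearIndependent ℝ v := by
      apply LinearIndependent.of_comp (degreeLT ℝ d).subtype
      exact hli
    have hnonempty : Nonempty (Fin d) := ⟨⟨0, hd⟩⟩
    have hspan : Submodule.span ℝ (Set.range v) = ⊤ :=
      hliv.span_eq_top_of_card_eq_finrank (by simp [hfr])
    have hRW : (⟨R, mem_degreeLT.2 hR⟩ : degreeLT ℝ d) ∈ Submodule.span ℝ (Set.range v) := by
      rw [hspan]; trivial
    rw [Submodule.mem_span_range_iff_exists_fun] at hRW
    obtain ⟨c, hc⟩ := hRW
    refine ⟨c, ?_⟩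
    have := congrArg Subtype.val hc
    simpa [hv] using this
  -- key: for any R of degree < d, polyInner R Q = R.eval t₀
  have hkey : ∀ R : Polynomial ℝ, R.degree < (d : ℕ) →
      polyInner Ωhat x R Q = R.eval t₀ := by
    intro R hR
    obtain ⟨c, hc⟩ := hrep R hR
    rw [← hc, polyInner_sum_left]
    have hone : ∀ j, polyInner Ωhat x (P j) Q = (P j).eval t₀ := by
      intro j
      rw [hQdef, polyInner_sum_right]
      simp [horth]
    simp only [hone]
    rw [eval_finset_sum]
    simp
  -- dotProduct with a equals polyInner with Q
  have hadot : ∀ R : Polynomial ℝ,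
      (∑ i, a i * R.eval (x i)) = polyInner Ωhat x R Q := by
    intro R
    have h0 : (∑ i, a i * R.eval (x i)) = a ⬝ᵥ fun i => R.eval (x i) := rfl
    rw [h0, ha, dotProduct_comm]
    rfl
  -- Q has degree < d
  have hQdeg : Q.degree < (d : ℕ) := by
    rw [hQdef]
    apply lt_of_le_of_lt (Polynomial.degree_sum_le _ _)
    rw [Finset.sup_lt_iff (by exact_mod_cast WithBot.bot_lt_coe d)]
    intro j _
    exact lt_of_le_of_lt (le_trans (Polynomial.degree_smul_le _ _) (hdeg j))
      (by exact_mod_cast j.2)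
  -- a reproduces
  have hrepro : Reproduces x t₀ d a := by
    intro R hR
    rw [hadot R, hkey R hR]
  refine ⟨hrepro, ?_⟩
  -- minimality
  intro b hb
  set c : Fin N → ℝ := b - a with hcdef
  have hcQ : c ⬝ᵥ (fun i => Q.eval (x i)) = 0 := by
    have h1 : ∑ i, b i * Q.eval (x i) = Q.eval t₀ := hb Q hQdeg
    have h2 : ∑ i, a i * Q.eval (x i) = Q.eval t₀ := hrepro Q hQdeg
    have h3 : c ⬝ᵥ (fun i => Q.eval (x i))
        = ∑ i, b i * Q.eval (x i) - ∑ i, a i * Q.eval (x i) := by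
      simp [hcdef, dotProduct, sub_mul, Finset.sum_sub_distrib]
    rw [h3, h1, h2, sub_self]
  have hΩa : Ωhat *ᵥ a = fun i => Q.eval (x i) := by
    rw [ha, Matrix.mulVec_mulVec, Matrix.mul_nonsing_inv _ hdet, Matrix.one_mulVec]
  have hcΩa : c ⬝ᵥ Ωhat *ᵥ a = 0 := by rw [hΩa]; exact hcQ
  have haΩc : a ⬝ᵥ Ωhat *ᵥ c = 0 := by
    rw [Matrix.dotProduct_mulVec, ← Matrix.mulVec_transpose, hsymm, dotProduct_comm]
    exact hcΩa
  have hcΩc : 0 ≤ c ⬝ᵥ Ωhat *ᵥ c := by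
    rcases eq_or_ne c 0 with h | h
    · simp [h]
    · exact le_of_lt (by simpa using hΩ.dotProduct_mulVec_pos h)
  have hb_eq : b = a + c := by rw [hcdef]; abel
  calc a ⬝ᵥ Ωhat *ᵥ a
      ≤ a ⬝ᵥ Ωhat *ᵥ a + c ⬝ᵥ Ωhat *ᵥ c := le_add_of_nonneg_right hcΩc
    _ = b ⬝ᵥ Ωhat *ᵥ b := by
        rw [hb_eq, Matrix.mulVec_add, dotProduct_add, add_dotProduct,
          add_dotProduct, haΩc, hcΩa]
        ring
end

section
/- Let d ≥ 1 and N > d be integers, let x ∈ ℝ^N have pairwise distinct entries, t_0 ∈ ℝ, let Ω̂ ∈ ℝ^{N×N} be symmetric positive definite, and let ∇_d ∈ ℝ^{(N−d)×N} be a matrix of full rank N − d with kernel Π_{d−1}|_x. If a⁰ and a¹ both reproduce Π_{d−1} with the setting (x, t_0), then (I_{N×N} − ∇_dᵀ (∇_d Ω̂ ∇_dᵀ)⁻¹ ∇_d Ω̂) a⁰ = (I_{N×N} − ∇_dᵀ (∇_d Ω̂ ∇_dᵀ)⁻¹ ∇_d Ω̂) a¹; that is, the minimum-variance coefficient vector is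 independent of the choice of the initial reproducing vector. -/
open Matrix Polynomial BigOperators

/-- The space `Π_{d−1}|_x ⊆ ℝ^N`. -/
def polyRestriction {N : ℕ} (x : Fin N → ℝ) (d : ℕ) : Submodule ℝ (Fin N → ℝ) :=
  Submodule.span ℝ (Set.range fun s : Fin d => fun i => x i ^ (s : ℕ))

/-- Auxiliary: a vector orthogonal (in the dot-product sense) to the kernel of a
full-rank matrix lies in the range of its transpose. -/
lemma mem_range_transpose_of_perp_ker {m N : ℕ} (A : Matrix (Fin m) (Fin N) ℝ)
    (hrank : A.rank = m) (v : Fin N → ℝ)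
    (hperp : ∀ k : Fin N → ℝ, A *ᵥ k = 0 → k ⬝ᵥ v = 0) :
    ∃ w : Fin m → ℝ, Aᵀ *ᵥ w = v := by
  classical
  let e := WithLp.linearEquiv 2 ℝ (Fin N → ℝ)
  set K : Submodule ℝ (EuclideanSpace ℝ (Fin N)) :=
    (LinearMap.ker A.mulVecLin).comap e.toLinearMap with hK
  set R : Submodule ℝ (EuclideanSpace ℝ (Fin N)) :=
    (LinearMap.range Aᵀ.mulVecLin).comap e.toLinearMap with hR
  have hinner : ∀ u w : EuclideanSpace ℝ (Fin N), (inner ℝ u w : ℝ) = u.ofLp ⬝ᵥ w.ofLp := by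
    intro u w
    simp [PiLp.inner_apply, dotProduct, mul_comm]
  have hKmem : ∀ u : EuclideanSpace ℝ (Fin N), u ∈ K → A *ᵥ u.ofLp = 0 := fun u hu => hu
  have hRle : R ≤ Kᗮ := by
    rintro r hr
    obtain ⟨w, hw⟩ := hr
    have hrw : r.ofLp = Aᵀ *ᵥ w := hw.symm
    rw [Submodule.mem_orthogonal]
    intro u hu
    have hu' : A *ᵥ u.ofLp = 0 := hu
    rw [hinner, hrw]
    rw [dotProduct_mulVec, vecMul_transpose, hu', zero_dotProduct]
  have hfinK : Module.finrank ℝ K = N - m := by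
    have h1 : Module.finrank ℝ (LinearMap.range A.mulVecLin)
        + Module.finrank ℝ (LinearMap.ker A.mulVecLin)
        = Module.finrank ℝ (Fin N → ℝ) := LinearMap.finrank_range_add_finrank_ker _
    have h2 : Module.finrank ℝ (LinearMap.range A.mulVecLin) = m := hrank
    rw [h2, Module.finrank_fintype_fun_eq_card, Fintype.card_fin] at h1
    have h3 : Module.finrank ℝ K = Module.finrank ℝ (LinearMap.ker A.mulVecLin) := by
      rw [hK, Submodule.comap_equiv_eq_map_symm, LinearEquiv.finrank_map_eq]
    omega
  have hfinR : Module.finrank ℝ R = m := by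
    have h : Aᵀ.rank = m := by rw [Matrix.rank_transpose, hrank]
    rw [hR, Submodule.comap_equiv_eq_map_symm, LinearEquiv.finrank_map_eq]
    exact h
  clear_value K R
  have hfinKperp : Module.finrank ℝ Kᗮ = m := by
    have h1 := Submodule.finrank_add_finrank_orthogonal K
    rw [hfinK, finrank_euclideanSpace_fin] at h1
    have h2 : Module.finrank ℝ K = N - m := hfinK
    have hmN : m ≤ N := by
      have := Matrix.rank_le_card_width A
      simp only [Fintype.card_fin] at this
      omega
    omega
  have hReq : R = Kᗮ :=
    Submodule.eq_of_le_of_finrank_eq hRle (hfinR.trans hfinKperp.symm)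
  have hvmem : WithLp.toLp 2 v ∈ Kᗮ :=
    (Submodule.mem_orthogonal K _).mpr fun u hu => by
      rw [hinner]; exact hperp u.ofLp (hKmem u hu)
  rw [← hReq, hR] at hvmem
  obtain ⟨w, hw⟩ := hvmem
  exact ⟨w, hw⟩

/-- The minimum-variance coefficient vector
`(I − ∇_dᵀ (∇_d Ω̂ ∇_dᵀ)⁻¹ ∇_d Ω̂) a⁰` does not depend on the choice of the initial
vector `a⁰` reproducing `Π_{d−1}` with the setting `(x, t₀)`. -/
theorem minvar_independent_of_initial (d N : ℕ) (hd : 1 ≤ d) (hdN : d < N)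
    (x : Fin N → ℝ) (hx : Function.Injective x) (t₀ : ℝ)
    (Ωhat : Matrix (Fin N) (Fin N) ℝ) (hΩ : Ωhat.PosDef)
    (nabla : Matrix (Fin (N - d)) (Fin N) ℝ)
    (hrank : nabla.rank = N - d)
    (hker : LinearMap.ker nabla.mulVecLin = polyRestriction x d)
    (a₀ a₁ : Fin N → ℝ)
    (ha₀ : Reproduces x t₀ d a₀) (ha₁ : Reproduces x t₀ d a₁) :
    (1 - nablaᵀ * (nabla * Ωhat * nablaᵀ)⁻¹ * (nabla * Ωhat)) *ᵥ a₀ =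
      (1 - nablaᵀ * (nabla * Ωhat * nablaᵀ)⁻¹ * (nabla * Ωhat)) *ᵥ a₁ := by
  classical
  set v : Fin N → ℝ := a₀ - a₁ with hv
  rw [← sub_eq_zero, ← Matrix.mulVec_sub]
  -- `v` is dot-orthogonal to every element of `polyRestriction x d`
  have hperp : ∀ k : Fin N → ℝ, k ∈ polyRestriction x d → k ⬝ᵥ v = 0 := by
    intro k hk
    induction hk using Submodule.span_induction with
    | mem k hkmem =>
      obtain ⟨s, rfl⟩ := hkmem
      have hdeg : (X ^ (s : ℕ) : Polynomial ℝ).degree < (d : ℕ) := by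
        rw [degree_X_pow]
        exact_mod_cast s.2
      have h0 := ha₀ (X ^ (s : ℕ)) hdeg
      have h1 := ha₁ (X ^ (s : ℕ)) hdeg
      simp only [eval_pow, eval_X] at h0 h1
      simp only [dotProduct, hv, Pi.sub_apply]
      calc ∑ i, x i ^ (s : ℕ) * (a₀ i - a₁ i)
          = (∑ i, a₀ i * x i ^ (s : ℕ)) - ∑ i, a₁ i * x i ^ (s : ℕ) := by
            rw [← Finset.sum_sub_distrib]; congr 1; ext i; ring
        _ = 0 := by rw [h0, h1, sub_self]
    | zero => simp
    | add u w _ _ hu hw => rw [add_dotProduct, hu, hw, add_zero]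
    | smul c u _ hu => rw [smul_dotProduct, hu, smul_zero]
  -- hence `v` is in the range of `nablaᵀ`
  obtain ⟨w, hw⟩ := mem_range_transpose_of_perp_ker nabla hrank v
    (fun k hk => hperp k (hker ▸ hk))
  -- `nablaᵀ *ᵥ ·` is injective
  have hTinj : ∀ y : Fin (N - d) → ℝ, y ≠ 0 → nablaᵀ *ᵥ y ≠ 0 := by
    intro y hy
    have hfk : Module.finrank ℝ (LinearMap.ker nablaᵀ.mulVecLin) = 0 := by
      have h1 := LinearMap.finrank_range_add_finrank_ker nablaᵀ.mulVecLin
      have h2 : Module.finrank ℝ (LinearMap.range nablaᵀ.mulVecLin) = N - d := by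
        have h : nablaᵀ.rank = N - d := by rw [Matrix.rank_transpose, hrank]
        exact h
      rw [h2, Module.finrank_fintype_fun_eq_card, Fintype.card_fin] at h1
      omega
    have hkbot : LinearMap.ker nablaᵀ.mulVecLin = ⊥ :=
      Submodule.finrank_eq_zero.mp hfk
    intro h
    have hmem : y ∈ LinearMap.ker nablaᵀ.mulVecLin := LinearMap.mem_ker.mpr h
    rw [hkbot, Submodule.mem_bot] at hmem
    exact hy hmem
  -- `nabla * Ωhat * nablaᵀ` is positive definite
  have hct : nablaᵀᴴ = nabla := by
    ext i j
    simp [conjTranspose_apply]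
  have hB' : (nablaᵀᴴ * Ωhat * nablaᵀ).PosDef := by
    refine Matrix.PosDef.of_dotProduct_mulVec_pos
      (isHermitian_conjTranspose_mul_mul nablaᵀ hΩ.1) ?_
    · intro y hy
      simpa only [star_mulVec, dotProduct_mulVec, vecMul_vecMul] using
        hΩ.dotProduct_mulVec_pos (hTinj y hy)
  have hB : (nabla * Ωhat * nablaᵀ).PosDef := by rwa [hct] at hB'
  have hdet : IsUnit (nabla * Ωhat * nablaᵀ).det := hB.det_pos.ne'.isUnit
  have hcancel : nablaᵀ * (nabla * Ωhat * nablaᵀ)⁻¹ * (nabla * Ωhat) * nablaᵀ = nablaᵀ := by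
    rw [Matrix.mul_assoc (nablaᵀ * (nabla * Ωhat * nablaᵀ)⁻¹) (nabla * Ωhat) nablaᵀ,
      Matrix.mul_assoc nablaᵀ (nabla * Ωhat * nablaᵀ)⁻¹ (nabla * Ωhat * nablaᵀ),
      Matrix.nonsing_inv_mul _ hdet, Matrix.mul_one]
  rw [← hv, ← hw, Matrix.sub_mulVec, Matrix.one_mulVec, Matrix.mulVec_mulVec, hcancel, sub_self]
end
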